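/- arXiv:1706.06676 — 2 statements merged into one kernel-verified Lean document; each statement's English description precedes it below -/
import Mathlib

section
/- Fix N ∈ ℕ, N ≥ 1, and C > 0. There exists a constant M = M(N, C) such that: for every N-times continuously differentiable g : [0,1] → ℝ with |g(t)| ≤ 1 for all t ∈ [0,1] and |g^{(N)}(t)| ≤ C for all t ∈ [0,1], one has |g^{(j)}(0)| ≤ M for all 0 ≤ j < N. -/
/-!
Write the Taylor polynomial of order `N - 1` of `g` at `0` as `∑ aₖ tᵏ` with
`aₖ = g⁽ᵏ⁾(0) / k!`. By the Lagrange remainder bound it is bounded by `1 + C` on `[0, 1]`.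
Since monomials are linearly independent as functions on the infinite set `[0, 1]`, the
coefficient map into `C([0, 1], ℝ)` is an injective linear map from a finite-dimensional
space, hence antilipschitz: the coefficients, and with them the derivatives `g⁽ᵏ⁾(0)`, are
bounded in terms of `N` and `C` alone.
-/

open Set Polynomial
open scoped Nat

theorem Polynomial.toContinuousMapOn_injective {s : Set ℝ} (hs : s.Infinite) :
    Function.Injective (fun p : ℝ[X] => p.toContinuousMapOn s) := by
  intro p q hpq
  refine Polynomial.eq_of_infinite_eval_eq p q (hs.mono fun t ht => ?_)
  exact congr($hpq ⟨t, ht⟩)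

theorem Polynomial.linearIndependent_toContinuousMapOn_X_pow {s : Set ℝ} (hs : s.Infinite)
    (N : ℕ) :
    LinearIndependent ℝ (fun j : Fin N => (X ^ (j : ℕ) : ℝ[X]).toContinuousMapOn s) := by
  have hmon : LinearIndependent ℝ (fun j : Fin N => (X ^ (j : ℕ) : ℝ[X])) := by
    simpa [Function.comp_def, X_pow_eq_monomial] using
      ((basisMonomials ℝ).linearIndependent.comp _ Fin.val_injective)
  exact hmon.map' (toContinuousMapOnAlgHom s).toLinearMap
    (LinearMap.ker_eq_bot.mpr (toContinuousMapOn_injective hs))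

theorem exists_norm_le_mul_of_forall_abs_sum_mul_pow_le {s : Set ℝ} [CompactSpace s]
    (hs : s.Infinite) (N : ℕ) :
    ∃ K : ℝ, ∀ (a : Fin N → ℝ) (B : ℝ), (∀ t ∈ s, |∑ j, a j * t ^ (j : ℕ)| ≤ B) →
      ‖a‖ ≤ K * B := by
  let L :=
    Fintype.linearCombination ℝ (fun j : Fin N => (X ^ (j : ℕ) : ℝ[X]).toContinuousMapOn s)
  obtain ⟨K, -, hK⟩ := L.exists_antilipschitzWith
    (LinearMap.ker_eq_bot.mpr
      (linearIndependent_toContinuousMapOn_X_pow hs N).fintypeLinearCombination_injective)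
  refine ⟨K, fun a B ha => (hK.le_mul_norm (map_zero L) a).trans ?_⟩
  have : Nonempty s := hs.nonempty.to_subtype
  gcongr
  rw [ContinuousMap.norm_le_of_nonempty]
  intro t
  simpa [L, Fintype.linearCombination_apply] using ha t t.2

theorem norm_taylorWithinEval_le {E : Type*} [NormedAddCommGroup E] [NormedSpace ℝ E]
    {f : ℝ → E} {a b x B C : ℝ} {n : ℕ} (hab : a ≤ b)
    (hf : ContDiffOn ℝ (n + 1) f (Icc a b)) (hfB : ∀ y ∈ Icc a b, ‖f y‖ ≤ B)
    (hfC : ∀ y ∈ Icc a b, ‖iteratedDerivWithin (n + 1) f (Icc a b) y‖ ≤ C) (hx : x ∈ Icc a b) :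
    ‖taylorWithinEval f n (Icc a b) a x‖ ≤ B + C * (x - a) ^ (n + 1) / n ! := by
  calc ‖taylorWithinEval f n (Icc a b) a x‖
      = ‖f x - (f x - taylorWithinEval f n (Icc a b) a x)‖ := by rw [sub_sub_cancel]
    _ ≤ ‖f x‖ + ‖f x - taylorWithinEval f n (Icc a b) a x‖ := norm_sub_le _ _
    _ ≤ B + C * (x - a) ^ (n + 1) / n ! :=
        add_le_add (hfB x hx) (taylor_mean_remainder_bound hab hf hx hfC)

theorem taylorWithinEval_eq_sum_fin (f : ℝ → ℝ) (n : ℕ) (s : Set ℝ) (x₀ x : ℝ) :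
    taylorWithinEval f n s x₀ x =
      ∑ k : Fin (n + 1), iteratedDerivWithin k f s x₀ / k ! * (x - x₀) ^ (k : ℕ) := by
  rw [taylor_within_apply, ← Fin.sum_univ_eq_sum_range]
  simp only [smul_eq_mul]
  congr! 1 with k
  ring

theorem stmt9_general (N : ℕ) (C : ℝ) :
    ∃ M : ℝ, ∀ g : ℝ → ℝ, ContDiffOn ℝ N g (Set.Icc (0:ℝ) 1) →
      (∀ t ∈ Set.Icc (0:ℝ) 1, |g t| ≤ 1) →
      (∀ t ∈ Set.Icc (0:ℝ) 1, |iteratedDerivWithin N g (Set.Icc (0:ℝ) 1) t| ≤ C) →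
      ∀ j < N, |iteratedDerivWithin j g (Set.Icc (0:ℝ) 1) 0| ≤ M := by
  rcases N with _ | n
  · exact ⟨0, fun _ _ _ _ j hj => absurd hj j.not_lt_zero⟩
  obtain ⟨K, hK⟩ :=
    exists_norm_le_mul_of_forall_abs_sum_mul_pow_le (Icc_infinite zero_lt_one) (n + 1)
  refine ⟨(n + 1)! * (K * (1 + C)), fun g hg hg1 hgC j hj => ?_⟩
  have hC : 0 ≤ C := (abs_nonneg _).trans (hgC 0 (left_mem_Icc.mpr zero_le_one))
  set a : Fin (n + 1) → ℝ := fun k => iteratedDerivWithin k g (Icc 0 1) 0 / (k : ℕ)!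
  have htaylor : ∀ t ∈ Icc (0 : ℝ) 1, |∑ k, a k * t ^ (k : ℕ)| ≤ 1 + C := by
    intro t ht
    have hrem : C * t ^ (n + 1) / n ! ≤ C :=
      calc C * t ^ (n + 1) / n ! ≤ C * t ^ (n + 1) :=
            div_le_self (mul_nonneg hC (pow_nonneg ht.1 _)) (Nat.one_le_cast.mpr n.factorial_pos)
        _ ≤ C := mul_le_of_le_one_right hC (pow_le_one₀ ht.1 ht.2)
    have h := norm_taylorWithinEval_le zero_le_one (by exact_mod_cast hg) hg1 hgC ht
    rw [Real.norm_eq_abs, taylorWithinEval_eq_sum_fin, sub_zero] at h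
    linarith
  calc |iteratedDerivWithin j g (Icc 0 1) 0| = j ! * |a ⟨j, hj⟩| := by
        simp [a, abs_div, mul_div_cancel₀, j.factorial_ne_zero]
    _ ≤ (n + 1)! * ‖a‖ := by
        gcongr
        exact norm_le_pi_norm a _
    _ ≤ (n + 1)! * (K * (1 + C)) := by gcongr; exact hK a _ htaylor

/-- Landau–Kolmogorov type bound: if |g| ≤ 1 and |g^{(N)}| ≤ C on [0,1] then all lower
    order derivatives of g at 0 are bounded by a constant M(N,C). -/
theorem stmt9 (N : ℕ) (hN : 1 ≤ N) (C : ℝ) (hC : 0 < C) :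
    ∃ M : ℝ, ∀ g : ℝ → ℝ, ContDiffOn ℝ N g (Set.Icc (0:ℝ) 1) →
      (∀ t ∈ Set.Icc (0:ℝ) 1, |g t| ≤ 1) →
      (∀ t ∈ Set.Icc (0:ℝ) 1, |iteratedDerivWithin N g (Set.Icc (0:ℝ) 1) t| ≤ C) →
      ∀ j < N, |iteratedDerivWithin j g (Set.Icc (0:ℝ) 1) 0| ≤ M :=
  stmt9_general N C
end

section
/- Let f : ℝ × ℝᵐ → ℝ be continuous, smooth in the second variable, and let a < b. For x ∈ ℝᵐ define L(x) = inf{ t - s : a < s < t < b, f(s,x) > 0 > f(t,x) } (interpreted as +∞ if no such s,t exist). Let L₀ > 0, ε > 0, and suppose x₁ ∈ ℝᵐ and a < s₁ < t₁ < b satisfy: (i) f(s₁,x₁) > 0 > f(t₁,x₁) with t₁ - s₁ < L₀ + ε/2, and (ii) L(x) > L₀ - ε/2 for all x in an open neighborhood V of x₁. Then for every t with s₁ + ε < t < t₁ - ε, one has ∂_x^α f(t, x₁) = 0 for all multi-indices α (in particular f(t, x₁) = 0). -/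
open Set

/-- The minimal-bicharacteristic argument (mincharcond): near a minimizing sign change of
    t ↦ f(t,x) from + to −, all x-derivatives of f vanish on the inner part of the
    interval. -/
theorem stmt17 (m : ℕ) (f : ℝ → EuclideanSpace ℝ (Fin m) → ℝ)
    (hfc : Continuous fun p : ℝ × EuclideanSpace ℝ (Fin m) => f p.1 p.2)
    (hfs : ∀ t : ℝ, ContDiff ℝ (⊤ : ℕ∞) (f t))
    (a b L₀ ε : ℝ) (hab : a < b) (hL₀ : 0 < L₀) (hε : 0 < ε)
    (x₁ : EuclideanSpace ℝ (Fin m)) (s₁ t₁ : ℝ)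
    (hs₁ : a < s₁) (hst : s₁ < t₁) (ht₁ : t₁ < b)
    (hsign : f s₁ x₁ > 0 ∧ 0 > f t₁ x₁) (hlen : t₁ - s₁ < L₀ + ε / 2)
    (V : Set (EuclideanSpace ℝ (Fin m))) (hV : IsOpen V) (hx₁ : x₁ ∈ V)
    (hL : ∀ x ∈ V, ∀ s t : ℝ, a < s → s < t → t < b →
      f s x > 0 → 0 > f t x → L₀ - ε / 2 < t - s) :
    ∀ t : ℝ, s₁ + ε < t → t < t₁ - ε →
      ∀ j : ℕ, iteratedFDeriv ℝ j (f t) x₁ = 0 := by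
  intro t hts htt j
  have hcs : Continuous fun x : EuclideanSpace ℝ (Fin m) => f s₁ x :=
    hfc.comp (Continuous.prodMk_right s₁)
  have hct : Continuous fun x : EuclideanSpace ℝ (Fin m) => f t₁ x :=
    hfc.comp (Continuous.prodMk_right t₁)
  set W : Set (EuclideanSpace ℝ (Fin m)) :=
    (V ∩ (fun x => f s₁ x) ⁻¹' Ioi 0) ∩ (fun x => f t₁ x) ⁻¹' Iio 0 with hW
  have hWo : IsOpen W :=
    (hV.inter (isOpen_Ioi.preimage hcs)).inter (isOpen_Iio.preimage hct)
  have hxW : x₁ ∈ W := ⟨⟨hx₁, hsign.1⟩, hsign.2⟩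
  have hzero : EqOn (f t) (fun _ => (0 : ℝ)) W := by
    rintro x ⟨⟨hxV, hs⟩, ht⟩
    rcases lt_trichotomy (f t x) 0 with h | h | h
    · exfalso
      have := hL x hxV s₁ t hs₁ (by linarith) (by linarith) hs h
      linarith
    · exact h
    · exfalso
      have := hL x hxV t t₁ (by linarith) (by linarith) ht₁ h ht
      linarith
  have h1 := (iteratedFDerivWithin_of_isOpen (𝕜 := ℝ) (f := f t) j hWo hxW).symm
  have h2 := (iteratedFDerivWithin_of_isOpen (𝕜 := ℝ)
    (f := fun _ : EuclideanSpace ℝ (Fin m) => (0 : ℝ)) j hWo hxW)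
  rw [h1, iteratedFDerivWithin_congr hzero hxW, h2, iteratedFDeriv_zero_fun]
  rfl
end
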